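/- Fix m ∈ ℕ with m ≥ 1 and c > √2, and let B be a standard one-dimensional Brownian motion started at 0, regarded as a random element of C[0,1]. Then almost surely there exists n₀ ∈ ℕ such that for every n ≥ n₀ and every interval [s,t] ∈ Λ_n(m), |B(t) − B(s)| ≤ c·√((t−s)·log(1/(t−s))). -/

import Mathlib

open MeasureTheory ProbabilityTheory Set

/-- A standard one-dimensional Brownian motion started at 0 on the probability
space `(Ω, P)`: `B 0 = 0` a.s., independent increments, Gaussian increments
`B (t+h) - B t ~ N(0, h)`, and a.s. continuous paths on `[0, ∞)`. -/
structure IsStdBM {Ω : Type} [MeasurableSpace Ω] (P : Measure Ω) (B : ℝ → Ω → ℝ) : Prop where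
  isProb : IsProbabilityMeasure P
  meas : ∀ t : ℝ, Measurable (B t)
  start : ∀ᵐ ω ∂P, B 0 ω = 0
  indepIncr : ∀ (n : ℕ) (t : Fin (n + 1) → ℝ), Monotone t → (∀ i, 0 ≤ t i) →
    iIndepFun
      (fun (i : Fin n) => fun ω => B (t i.succ) ω - B (t i.castSucc) ω) P
  gaussIncr : ∀ t h : ℝ, 0 ≤ t → 0 < h →
    P.map (fun ω => B (t + h) ω - B t ω) = gaussianReal 0 h.toNNReal
  cont : ∀ᵐ ω ∂P, ContinuousOn (fun t => B t ω) (Ici 0)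

/-- `Λ_n(m)`: the collection of intervals `[(k−1+b)·2^(−n+a), (k+b)·2^(−n+a)]`
for `k ∈ {1, …, 2^n}` and `a, b ∈ {0, 1/m, …, (m−1)/m}`, encoded as pairs of
endpoints. -/
def LambdaN (n m : ℕ) : Set (ℝ × ℝ) :=
  {p | ∃ k i j : ℕ, 1 ≤ k ∧ k ≤ 2 ^ n ∧ i < m ∧ j < m ∧
    p.1 = ((k : ℝ) - 1 + (j : ℝ) / m) * (2 : ℝ) ^ (-(n : ℝ) + (i : ℝ) / m) ∧
    p.2 = ((k : ℝ) + (j : ℝ) / m) * (2 : ℝ) ^ (-(n : ℝ) + (i : ℝ) / m)}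


/-! By the Gaussian tail bound, an increment of Brownian motion over a time interval of length
`h ≤ 1` exceeds `c √(h log (1/h))` with probability at most `2 h^(c²/2)`. The family `Λ_{n+1}(m)`
has at most `2^(n+1) m²` intervals, each of length at most `2^(-n)`, so some interval of
`Λ_{n+1}(m)` violates the bound with probability at most `4 m² (2^(1 - c²/2))^n`. This is summable
because `c² > 2`, and Borel–Cantelli concludes. -/

open Filter
open scoped NNReal

lemma ProbabilityTheory.hasSubgaussianMGF_of_map_eq_gaussianReal {Ω : Type*} [MeasurableSpace Ω]
    {P : Measure Ω} {X : Ω → ℝ} {v : ℝ≥0} (hX : AEMeasurable X P)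
    (hXv : P.map X = gaussianReal 0 v) : HasSubgaussianMGF X v P := by
  rw [← HasSubgaussianMGF.id_map_iff hX, hXv]
  exact ⟨integrable_exp_mul_gaussianReal, fun t => by simp [mgf_id_gaussianReal]⟩

lemma ProbabilityTheory.measureReal_abs_ge_le_of_map_eq_gaussianReal {Ω : Type*}
    [MeasurableSpace Ω] {P : Measure Ω} {X : Ω → ℝ} {v : ℝ≥0} (hX : AEMeasurable X P)
    (hXv : P.map X = gaussianReal 0 v) {ε : ℝ} (hε : 0 ≤ ε) :
    P.real {ω | ε ≤ |X ω|} ≤ 2 * Real.exp (-ε ^ 2 / (2 * v)) := by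
  have hsub := hasSubgaussianMGF_of_map_eq_gaussianReal hX hXv
  have hsplit : {ω | ε ≤ |X ω|} = {ω | ε ≤ X ω} ∪ {ω | ε ≤ (-X) ω} := by
    ext ω; simp [le_abs]
  calc P.real {ω | ε ≤ |X ω|}
      ≤ P.real {ω | ε ≤ X ω} + P.real {ω | ε ≤ (-X) ω} := hsplit ▸ measureReal_union_le _ _
    _ ≤ _ := by linarith [hsub.measure_ge_le hε, hsub.neg.measure_ge_le hε]

lemma MeasureTheory.ae_eventually_notMem_of_summable_measureReal {α : Type*}
    [MeasurableSpace α] {μ : Measure α} [IsFiniteMeasure μ] {s : ℕ → Set α}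
    (hs : Summable fun n => μ.real (s n)) : ∀ᵐ x ∂μ, ∀ᶠ n in atTop, x ∉ s n := by
  refine ae_eventually_notMem ?_
  simp_rw [← fun n => ofReal_measureReal (μ := μ) (s := s n),
    ← ENNReal.ofReal_tsum_of_nonneg (fun _ => measureReal_nonneg) hs]
  exact ENNReal.ofReal_ne_top

lemma exists_finset_coe_eq_LambdaN (n m : ℕ) :
    ∃ F : Finset (ℝ × ℝ), ↑F = LambdaN n m ∧ F.card ≤ 2 ^ n * m ^ 2 := by
  refine ⟨(Finset.Icc 1 (2 ^ n) ×ˢ Finset.range m ×ˢ Finset.range m).image fun x : ℕ × ℕ × ℕ =>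
    (((x.1 : ℝ) - 1 + (x.2.2 : ℝ) / m) * (2 : ℝ) ^ (-(n : ℝ) + (x.2.1 : ℝ) / m),
      ((x.1 : ℝ) + (x.2.2 : ℝ) / m) * (2 : ℝ) ^ (-(n : ℝ) + (x.2.1 : ℝ) / m)), ?_, ?_⟩
  · ext p
    simp [LambdaN, Prod.ext_iff, eq_comm, and_assoc]
  · refine Finset.card_image_le.trans_eq ?_
    simp [sq]

lemma LambdaN_succ_bounds {n m : ℕ} {p : ℝ × ℝ} (hp : p ∈ LambdaN (n + 1) m) :
    0 ≤ p.1 ∧ 0 < p.2 - p.1 ∧ p.2 - p.1 ≤ (2 : ℝ) ^ (-(n : ℝ)) := by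
  obtain ⟨k, i, j, hk, -, hi, -, h₁, h₂⟩ := hp
  have hm : (0 : ℝ) < m := by exact_mod_cast (Nat.zero_le i).trans_lt hi
  have him : (i : ℝ) / m < 1 := (div_lt_one hm).mpr (by exact_mod_cast hi)
  have hk : (1 : ℝ) ≤ k := by exact_mod_cast hk
  have hlen : p.2 - p.1 = (2 : ℝ) ^ (-((n + 1 : ℕ) : ℝ) + (i : ℝ) / m) := by
    rw [h₁, h₂]; ring
  refine ⟨h₁ ▸ mul_nonneg (by linarith [div_nonneg j.cast_nonneg hm.le]) (by positivity),
    hlen ▸ by positivity, hlen ▸ Real.rpow_le_rpow_of_exponent_le one_le_two ?_⟩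
  push_cast
  linarith

def incrementExceedsModulus {Ω : Type} (B : ℝ → Ω → ℝ) (c : ℝ) (p : ℝ × ℝ) : Set Ω :=
  {ω | c * Real.sqrt ((p.2 - p.1) * Real.log (1 / (p.2 - p.1))) ≤ |B p.2 ω - B p.1 ω|}

def modulusExceedance {Ω : Type} (B : ℝ → Ω → ℝ) (m : ℕ) (c : ℝ) (n : ℕ) : Set Ω :=
  ⋃ p ∈ LambdaN n m, incrementExceedsModulus B c p

namespace IsStdBM

variable {Ω : Type} [MeasurableSpace Ω] {P : Measure Ω} {B : ℝ → Ω → ℝ}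

lemma measureReal_abs_increment_ge_le (hB : IsStdBM P B) {s h ε : ℝ} (hs : 0 ≤ s) (hh : 0 < h)
    (hε : 0 ≤ ε) :
    P.real {ω | ε ≤ |B (s + h) ω - B s ω|} ≤ 2 * Real.exp (-ε ^ 2 / (2 * h)) := by
  have := measureReal_abs_ge_le_of_map_eq_gaussianReal
    ((hB.meas _).sub (hB.meas _)).aemeasurable (hB.gaussIncr s h hs hh) hε
  rwa [Real.coe_toNNReal _ hh.le] at this

lemma measureReal_abs_increment_ge_modulus_le (hB : IsStdBM P B) {s h c : ℝ} (hs : 0 ≤ s)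
    (hh₀ : 0 < h) (hh₁ : h ≤ 1) (hc : 0 ≤ c) :
    P.real {ω | c * Real.sqrt (h * Real.log (1 / h)) ≤ |B (s + h) ω - B s ω|}
      ≤ 2 * h ^ (c ^ 2 / 2) := by
  refine (hB.measureReal_abs_increment_ge_le hs hh₀ (by positivity)).trans_eq ?_
  have hlog : 0 ≤ Real.log (1 / h) := Real.log_nonneg (one_le_one_div hh₀ hh₁)
  rw [mul_pow, Real.sq_sqrt (mul_nonneg hh₀.le hlog), Real.rpow_def_of_pos hh₀, one_div,
    Real.log_inv]
  congr 2
  field_simp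

lemma measureReal_modulusExceedance_succ_le (hB : IsStdBM P B) (m : ℕ) {c : ℝ} (hc : 0 ≤ c)
    (n : ℕ) :
    P.real (modulusExceedance B m c (n + 1)) ≤ 4 * m ^ 2 * ((2 : ℝ) ^ (1 - c ^ 2 / 2)) ^ n := by
  obtain ⟨F, hF, hcard⟩ := exists_finset_coe_eq_LambdaN (n + 1) m
  have hbound : ∀ p ∈ F, P.real (incrementExceedsModulus B c p)
      ≤ 2 * ((2 : ℝ) ^ (-(n : ℝ))) ^ (c ^ 2 / 2) := by
    intro p hp
    obtain ⟨hp₁, hlen₀, hlen⟩ := LambdaN_succ_bounds (hF ▸ hp : p ∈ LambdaN (n + 1) m)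
    have hlen₁ : p.2 - p.1 ≤ 1 :=
      hlen.trans (Real.rpow_le_one_of_one_le_of_nonpos one_le_two (by simp))
    have := hB.measureReal_abs_increment_ge_modulus_le hp₁ hlen₀ hlen₁ hc
    rw [add_sub_cancel] at this
    exact this.trans (by gcongr)
  calc P.real (modulusExceedance B m c (n + 1))
      ≤ ∑ p ∈ F, P.real (incrementExceedsModulus B c p) := by
        rw [modulusExceedance, ← hF, Finset.set_biUnion_coe]
        exact measureReal_biUnion_finset_le _ _
    _ ≤ F.card * (2 * ((2 : ℝ) ^ (-(n : ℝ))) ^ (c ^ 2 / 2)) := by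
        simpa using Finset.sum_le_card_nsmul _ _ _ hbound
    _ ≤ (2 ^ (n + 1) * m ^ 2 : ℕ) * (2 * ((2 : ℝ) ^ (-(n : ℝ))) ^ (c ^ 2 / 2)) := by gcongr
    _ = 4 * m ^ 2 * ((2 : ℝ) ^ (1 - c ^ 2 / 2)) ^ n := by
        rw [← Real.rpow_mul zero_le_two, ← Real.rpow_natCast _ n, ← Real.rpow_mul zero_le_two,
          show (1 - c ^ 2 / 2) * n = n + -n * (c ^ 2 / 2) by ring, Real.rpow_add two_pos,
          Real.rpow_natCast]
        push_cast
        ring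

end IsStdBM

theorem stmt_7_general {Ω : Type} [MeasurableSpace Ω] (P : Measure Ω) (B : ℝ → Ω → ℝ)
    (hB : IsStdBM P B) (m : ℕ) (c : ℝ) (hc : Real.sqrt 2 < c) :
    ∀ᵐ ω ∂P, ∃ n₀ : ℕ, ∀ n : ℕ, n₀ ≤ n → ∀ p ∈ LambdaN n m,
      |B p.2 ω - B p.1 ω| ≤ c * Real.sqrt ((p.2 - p.1) * Real.log (1 / (p.2 - p.1))) := by
  have := hB.isProb
  have hc₀ : 0 < c := (Real.sqrt_nonneg 2).trans_lt hc
  have hr : (2 : ℝ) ^ (1 - c ^ 2 / 2) < 1 :=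
    Real.rpow_lt_one_of_one_lt_of_neg one_lt_two (by linarith [(Real.sqrt_lt' hc₀).mp hc])
  have hsum : Summable fun n => P.real (modulusExceedance B m c n) := by
    refine (summable_nat_add_iff 1).mp (Summable.of_nonneg_of_le (fun _ => measureReal_nonneg)
      (hB.measureReal_modulusExceedance_succ_le m hc₀.le) ?_)
    exact (summable_geometric_of_lt_one (by positivity) hr).mul_left _
  filter_upwards [ae_eventually_notMem_of_summable_measureReal hsum] with ω hω
  obtain ⟨n₀, hn₀⟩ := eventually_atTop.mp hω
  refine ⟨n₀, fun n hn p hp => ?_⟩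
  by_contra! h
  exact hn₀ n hn (mem_biUnion hp h.le)

/-- Almost surely there is `n₀` such that for every `n ≥ n₀` and every interval
`[s,t] ∈ Λ_n(m)`, `|B(t) − B(s)| ≤ c·√((t−s)·log(1/(t−s)))`. -/
theorem stmt_7 {Ω : Type} [MeasurableSpace Ω] (P : Measure Ω) (B : ℝ → Ω → ℝ)
    (hB : IsStdBM P B) (m : ℕ) (hm : 1 ≤ m) (c : ℝ) (hc : Real.sqrt 2 < c) :
    ∀ᵐ ω ∂P, ∃ n₀ : ℕ, ∀ n : ℕ, n₀ ≤ n → ∀ p ∈ LambdaN n m,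
      |B p.2 ω - B p.1 ω| ≤ c * Real.sqrt ((p.2 - p.1) * Real.log (1 / (p.2 - p.1))) :=
  stmt_7_general P B hB m c hc
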